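/- There exists an LRL expression t and distinct atoms a, b such that (a b)·t ~ t and FA(t) = {a, b}. Concretely, t = letrec c.a; d.b in True satisfies (a b)·t ~ t. -/

import Mathlib

/-- Letrec language LRL: atoms, lambda, function application, letrec. -/
inductive LRL : Type
  | atom (a : ℕ) : LRL
  | lam (a : ℕ) (e : LRL) : LRL
  | app (f : ℕ) (es : List LRL) : LRL
  | letr (env : List (ℕ × LRL)) (e : LRL) : LRL

mutual
/-- Action of an atom-permutation on expressions (renames all atoms). -/
def act (π : Equiv.Perm ℕ) : LRL → LRL
  | .atom a => .atom (π a)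
  | .lam a e => .lam (π a) (act π e)
  | .app f es => .app f (actList π es)
  | .letr env e => .letr (actEnv π env) (act π e)

def actList (π : Equiv.Perm ℕ) : List LRL → List LRL
  | [] => []
  | e :: es => act π e :: actList π es

def actEnv (π : Equiv.Perm ℕ) : List (ℕ × LRL) → List (ℕ × LRL)
  | [] => []
  | (a, e) :: env => (π a, act π e) :: actEnv π env
end

mutual
/-- Free atoms of an expression. -/
def FA : LRL → Finset ℕ
  | .atom a => {a}
  | .lam a e => FA e \ {a}
  | .app _ es => FAList es
  | .letr env e => (FAEnv env ∪ FA e) \ (env.map Prod.fst).toFinset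

def FAList : List LRL → Finset ℕ
  | [] => ∅
  | e :: es => FA e ∪ FAList es

def FAEnv : List (ℕ × LRL) → Finset ℕ
  | [] => ∅
  | (_, e) :: env => FA e ∪ FAEnv env
end

/-- Iterated lambda over the binders of an environment, around the tuple of
the bound expressions together with the body (tuples are encoded as a
function application with a reserved function symbol `0`). -/
def tupled (env : List (ℕ × LRL)) (e : LRL) : LRL :=
  (env.map Prod.fst).foldr LRL.lam (LRL.app 0 (env.map Prod.snd ++ [e]))

/-- α-equivalence on LRL, where letrec environments are compared up to a
permutation of the bindings. -/
inductive Aeq : LRL → LRL → Prop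
  | atom (a : ℕ) : Aeq (.atom a) (.atom a)
  | app (f : ℕ) (es es' : List LRL) (hlen : es.length = es'.length)
      (h : ∀ (i : ℕ) (h1 : i < es.length) (h2 : i < es'.length),
        Aeq (es.get ⟨i, h1⟩) (es'.get ⟨i, h2⟩)) :
      Aeq (.app f es) (.app f es')
  | lamSame (a : ℕ) (e e' : LRL) (h : Aeq e e') : Aeq (.lam a e) (.lam a e')
  | lamDiff (a b : ℕ) (e e' : LRL) (hab : a ≠ b) (hfresh : a ∉ FA e')
      (h : Aeq e (act (Equiv.swap a b) e')) : Aeq (.lam a e) (.lam b e')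
  | letr (env env' env'' : List (ℕ × LRL)) (e e' : LRL)
      (hperm : env'.Perm env'')
      (h : Aeq (tupled env e) (tupled env'' e')) :
      Aeq (.letr env e) (.letr env' e')

/-!
Swapping `a` and `b` turns `t = letrec c.a; d.b in True` into `letrec c.b; d.a in True`, which is
`t` with the binder names `c` and `d` exchanged. After permuting the bindings of `t`, the letrec rule
compares `λc.λd.(b, a, True)` with `λd.λc.(b, a, True)`, and exchanging two adjacent binders is
α-equivalence as soon as renaming `c ↔ d` fixes the body.
-/

theorem Aeq.app_of_forall₂ {f : ℕ} {es es' : List LRL} (h : List.Forall₂ Aeq es es') :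
    Aeq (.app f es) (.app f es') :=
  Aeq.app f es es' h.length_eq h.get

theorem Aeq.app_refl {f : ℕ} {es : List LRL} (h : ∀ e ∈ es, Aeq e e) :
    Aeq (.app f es) (.app f es) :=
  Aeq.app_of_forall₂ (List.forall₂_same.2 h)

theorem notMem_FA_lam (a : ℕ) (e : LRL) : a ∉ FA (.lam a e) := by
  simp [FA]

theorem Aeq.lam_lam_comm {c d : ℕ} {u : LRL} (hcd : c ≠ d)
    (hu : act (Equiv.swap c d) u = u) (hrefl : Aeq u u) :
    Aeq (.lam c (.lam d u)) (.lam d (.lam c u)) := by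
  refine Aeq.lamDiff c d _ _ hcd (notMem_FA_lam c u) ?_
  have hact : act (Equiv.swap c d) (.lam c u) = .lam d u := by
    simp only [act, Equiv.swap_apply_left, hu]
  exact hact ▸ Aeq.lamSame d u u hrefl

theorem Aeq.letr_exchange_binders {c d : ℕ} {x y e : LRL} (hcd : c ≠ d)
    (hu : act (Equiv.swap c d) (.app 0 [x, y, e]) = .app 0 [x, y, e])
    (hrefl : Aeq (.app 0 [x, y, e]) (.app 0 [x, y, e])) :
    Aeq (.letr [(c, x), (d, y)] e) (.letr [(c, y), (d, x)] e) :=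
  Aeq.letr _ _ [(d, x), (c, y)] _ _ (List.Perm.swap _ _ _)
    (by simpa [tupled] using Aeq.lam_lam_comm hcd hu hrefl)

/-- There is an expression `t` with `(a b)·t ~ t` and `FA t = {a, b}`:
concretely `t = letrec c.a; d.b in True` (with `True` a nullary function
symbol, here encoded as function symbol `1`). -/
theorem nontrivial_fixpoint (a b c d : ℕ)
    (hab : a ≠ b) (hac : a ≠ c) (had : a ≠ d) (hbc : b ≠ c) (hbd : b ≠ d)
    (hcd : c ≠ d) :
    ∃ t : LRL, Aeq (act (Equiv.swap a b) t) t ∧ FA t = {a, b} ∧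
      t = LRL.letr [(c, LRL.atom a), (d, LRL.atom b)] (LRL.app 1 []) := by
  refine ⟨_, ?_, ?_, rfl⟩
  · have hswap : act (Equiv.swap a b) (.letr [(c, .atom a), (d, .atom b)] (.app 1 []))
        = .letr [(c, .atom b), (d, .atom a)] (.app 1 []) := by
      simp [act, actEnv, actList, Equiv.swap_apply_of_ne_of_ne hac.symm hbc.symm,
        Equiv.swap_apply_of_ne_of_ne had.symm hbd.symm]
    rw [hswap]
    refine Aeq.letr_exchange_binders hcd ?_ (Aeq.app_refl fun e he => ?_)
    · simp [act, actList, Equiv.swap_apply_of_ne_of_ne hbc hbd,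
        Equiv.swap_apply_of_ne_of_ne hac had]
    · simp only [List.mem_cons, List.not_mem_nil, or_false] at he
      rcases he with rfl | rfl | rfl
      · exact Aeq.atom b
      · exact Aeq.atom a
      · exact Aeq.app_refl (by simp)
  · simp [FA, FAEnv, FAList, hac.symm, hbc.symm, had.symm, hbd.symm]
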